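/- arXiv:1411.0948 — 2 statements merged into one kernel-verified Lean document; each statement's English description precedes it below -/
import Mathlib

section
/- For all real t with 0 ≤ t ≤ 4, we have 2e^{-t/4} - e^{-t/2} ≤ e^{-t²/64}. -/
/-!
With `x = exp (-t/4)` the left side is `2x - x² = 1 - (1 - x)²`, while `exp (-t²/64) ≥ 1 - (t/8)²`.
So it suffices that `1 - x ≥ t/8`, i.e. `exp (-u) ≤ 1 - u/2` for `u = t/4 ∈ [0, 1]`, which follows
from `exp u ≥ 1 + u` and `(1 + u)(1 - u/2) = 1 + u(1 - u)/2 ≥ 1`.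
-/

open Real

lemma Real.exp_neg_le_one_sub_half {u : ℝ} (h₀ : 0 ≤ u) (h₁ : u ≤ 1) :
    exp (-u) ≤ 1 - u / 2 := by
  have hexp : u + 1 ≤ exp u := add_one_le_exp u
  have hprod : 1 ≤ (u + 1) * (1 - u / 2) := by nlinarith
  rw [exp_neg, inv_le_iff_one_le_mul₀ (exp_pos u)]
  exact hprod.trans (mul_le_mul_of_nonneg_right hexp (by linarith)) |>.trans_eq (mul_comm _ _)

lemma two_mul_sub_sq_le_one_sub_sq {x c : ℝ} (hc : 0 ≤ c) (hcx : c ≤ 1 - x) :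
    2 * x - x ^ 2 ≤ 1 - c ^ 2 := by
  nlinarith [mul_le_mul hcx hcx hc (hc.trans hcx)]

theorem exp_ineq_on_interval :
    ∀ t : ℝ, 0 ≤ t → t ≤ 4 →
      2 * Real.exp (-t / 4) - Real.exp (-t / 2) ≤ Real.exp (-t ^ 2 / 64) := by
  intro t ht ht4
  have hsq : exp (-t / 2) = exp (-t / 4) ^ 2 := by
    rw [← exp_nat_mul]; ring_nf
  have hgap : t / 8 ≤ 1 - exp (-t / 4) := by
    have := exp_neg_le_one_sub_half (u := t / 4) (by positivity) (by linarith)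
    rw [neg_div]; linarith
  calc 2 * exp (-t / 4) - exp (-t / 2) ≤ 1 - (t / 8) ^ 2 := by
        rw [hsq]; exact two_mul_sub_sq_le_one_sub_sq (by positivity) hgap
    _ = -t ^ 2 / 64 + 1 := by ring
    _ ≤ exp (-t ^ 2 / 64) := add_one_le_exp _
end

section
/- Let Z₁, ..., Z_k be i.i.d. random variables, each distributed as the sum of two independent exponential random variables of rate 1/2, and let Z = min{Z₁,...,Z_k}. Then E[Z] ≤ 8√(π/k) + 2^{k+2}/(k e^k). In particular, E[Z] = O(1/√k). -/
/-!
A sum `Zᵢ = Wᵢ₀ + Wᵢ₁` exceeds `t` only if one summand exceeds `t / 2`, so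
`P(Zᵢ > t) ≤ 1 - (1 - e^{-t/4})²`. The `Zᵢ` are functions of disjoint blocks of the independent
family `W`, hence independent, and `P(min Zᵢ > t)` is at most the `k`-th power of this bound.
Integrating the tail: on `[0, 4]` we have `1 - e^{-t/4} ≥ t / 8`, so the bound is at most the
Gaussian `exp (-k t² / 64)`, giving the `√(π / k)` term; beyond `4` it is at most
`2^k e^{-k t / 4}`, whose integral over `(4, ∞)` is `2^{k+2} / (k e^k)`.
-/

open MeasureTheory ProbabilityTheory Real Set

lemma half_le_one_sub_exp_neg {x : ℝ} (h0 : 0 ≤ x) (h1 : x ≤ 1) : x / 2 ≤ 1 - exp (-x) := by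
  have hexp : exp (-x) * (1 + x) ≤ 1 := by
    rw [exp_neg, inv_mul_le_iff₀ (exp_pos x)]
    linarith [add_one_le_exp x]
  nlinarith [exp_pos (-x)]

lemma one_sub_sq_pow_le_exp_neg (k : ℕ) {s : ℝ} (hs : s ^ 2 ≤ 1) :
    (1 - s ^ 2) ^ k ≤ exp (-(k * s ^ 2)) := by
  calc (1 - s ^ 2) ^ k ≤ exp (-s ^ 2) ^ k :=
        pow_le_pow_left₀ (by linarith) (by linarith [add_one_le_exp (-s ^ 2)]) k
    _ = exp (-(k * s ^ 2)) := by rw [← exp_nat_mul]; ring_nf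

theorem Finset.measurable_inf' {α δ ι : Type*} [MeasurableSpace α] [MeasurableSpace δ]
    [SemilatticeInf α] [MeasurableInf₂ α] {s : Finset ι} (hs : s.Nonempty) {f : ι → δ → α}
    (hf : ∀ n ∈ s, Measurable (f n)) : Measurable fun x ↦ s.inf' hs (f · x) := by
  have hinf : Measurable (s.inf' hs f) :=
    Finset.inf'_induction hs _ (fun _f hf _g hg ↦ hf.inf hg) fun n hn ↦ hf n hn
  convert hinf using 1
  ext x
  exact (Finset.inf'_apply hs f x).symm

lemma lintegral_ofReal_eq_setLIntegral_measure_lt {α : Type*} [MeasurableSpace α]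
    {μ : Measure α} {f : α → ℝ} (hf : AEMeasurable f μ) :
    ∫⁻ ω, ENNReal.ofReal (f ω) ∂μ = ∫⁻ t in Ioi 0, μ {ω | t < f ω} := by
  have hlayer := lintegral_eq_lintegral_meas_lt μ (f := fun ω ↦ max (f ω) 0)
    (ae_of_all _ fun _ ↦ le_max_right _ _) (hf.max aemeasurable_const)
  simp only [ENNReal.ofReal_max, ENNReal.ofReal_zero, zero_le, max_eq_left] at hlayer
  rw [hlayer]
  refine setLIntegral_congr_fun measurableSet_Ioi fun t (ht : 0 < t) ↦ ?_
  simp [ht.not_gt]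

namespace ProbabilityTheory

variable {Ω : Type*} [MeasurableSpace Ω] {μ : Measure Ω}

lemma iIndepFun.curry {ι κ β : Type*} [MeasurableSpace β] {X : ι × κ → Ω → β}
    (hX : ∀ p, Measurable (X p)) (h : iIndepFun X μ) :
    iIndepFun (fun i ω j ↦ X (i, j) ω) μ := by
  have := h.isProbabilityMeasure
  have : ∀ p, IsProbabilityMeasure (μ.map (X p)) :=
    fun p ↦ Measure.isProbabilityMeasure_map (hX p).aemeasurable
  have hrow : ∀ i, iIndepFun (fun j ↦ X (i, j)) μ :=
    fun i ↦ h.precomp (Prod.mk_right_injective i)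
  rw [iIndepFun_iff_map_fun_eq_infinitePi_map (by fun_prop)]
  have hcurry : (fun ω i j ↦ X (i, j) ω) = MeasurableEquiv.curry ι κ β ∘ fun ω p ↦ X p ω := rfl
  rw [hcurry, ← Measure.map_map (by fun_prop) (by fun_prop), h.map_fun_eq_infinitePi_map hX,
    Measure.infinitePi_map_curry (fun i j ↦ μ.map (X (i, j)))]
  congr 1
  funext i
  rw [← (hrow i).map_fun_eq_infinitePi_map fun j ↦ hX _]

lemma iIndepFun.measure_lt_inf' {ι β : Type*} [LinearOrder β] [TopologicalSpace β]
    [MeasurableSpace β] [OpensMeasurableSpace β] [OrderClosedTopology β]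
    {Z : ι → Ω → β} (hZ : iIndepFun Z μ) {s : Finset ι} (hs : s.Nonempty) (t : β) :
    μ {ω | t < s.inf' hs (Z · ω)} = ∏ i ∈ s, μ {ω | t < Z i ω} := by
  have hset : {ω | t < s.inf' hs (Z · ω)} = ⋂ i ∈ s, Z i ⁻¹' Ioi t := by
    ext ω
    simp [Finset.lt_inf'_iff]
  rw [hset]
  exact hZ.measure_inter_preimage_eq_mul s (fun _ _ ↦ measurableSet_Ioi)

lemma IndepFun.measure_lt_add_le [IsProbabilityMeasure μ] {X Y : Ω → ℝ}
    (hXY : IndepFun X Y μ) (hX : Measurable X) (hY : Measurable Y) (a b : ℝ) :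
    μ {ω | a + b < X ω + Y ω} ≤ 1 - μ {ω | X ω ≤ a} * μ {ω | Y ω ≤ b} := by
  change _ ≤ 1 - μ (X ⁻¹' Iic a) * μ (Y ⁻¹' Iic b)
  rw [← hXY.measure_inter_preimage_eq_mul _ _ measurableSet_Iic measurableSet_Iic,
    ← prob_compl_eq_one_sub ((hX measurableSet_Iic).inter (hY measurableSet_Iic))]
  exact measure_mono fun ω (h : a + b < X ω + Y ω) ⟨hx, hy⟩ ↦ (add_le_add hx hy).not_gt h

end ProbabilityTheory

noncomputable def sumExpTail (t : ℝ) : ℝ := 1 - (1 - exp (-t / 4)) ^ 2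

lemma sumExpTail_nonneg {t : ℝ} (ht : 0 ≤ t) : 0 ≤ sumExpTail t := by
  have : exp (-t / 4) ≤ 1 := exp_le_one_iff.2 (by linarith)
  unfold sumExpTail
  nlinarith [exp_pos (-t / 4)]

lemma sumExpTail_pow_le_exp_neg_mul_sq (k : ℕ) {t : ℝ} (h0 : 0 ≤ t) (h4 : t ≤ 4) :
    sumExpTail t ^ k ≤ exp (-(k / 64) * t ^ 2) := by
  set s := 1 - exp (-t / 4) with hs
  have hs1 : s ≤ 1 := by linarith [exp_pos (-t / 4)]
  have hs0 : t / 8 ≤ s := by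
    have := half_le_one_sub_exp_neg (x := t / 4) (by linarith) (by linarith)
    rw [← neg_div] at this
    linarith
  have hsq : (t / 8) ^ 2 ≤ s ^ 2 := pow_le_pow_left₀ (by positivity) hs0 2
  calc sumExpTail t ^ k ≤ exp (-(k * s ^ 2)) := one_sub_sq_pow_le_exp_neg k (by nlinarith)
    _ ≤ exp (-(k / 64) * t ^ 2) := by
      gcongr
      nlinarith [mul_le_mul_of_nonneg_left hsq k.cast_nonneg]

lemma sumExpTail_pow_le_two_pow_mul_exp (k : ℕ) {t : ℝ} (ht : 0 ≤ t) :
    sumExpTail t ^ k ≤ 2 ^ k * exp (-(k / 4) * t) := by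
  have hbound : sumExpTail t ≤ 2 * exp (-t / 4) := by
    unfold sumExpTail
    nlinarith [exp_pos (-t / 4)]
  calc sumExpTail t ^ k ≤ (2 * exp (-t / 4)) ^ k :=
        pow_le_pow_left₀ (sumExpTail_nonneg ht) hbound k
    _ = 2 ^ k * exp (-(k / 4) * t) := by rw [mul_pow, ← exp_nat_mul]; ring_nf

lemma setLIntegral_Ioc_sumExpTail_pow_le {k : ℕ} (hk : 0 < k) :
    ∫⁻ t in Ioc 0 4, ENNReal.ofReal (sumExpTail t ^ k) ≤ ENNReal.ofReal (8 * √(π / k)) := by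
  have hb : (0 : ℝ) < k / 64 := by positivity
  calc ∫⁻ t in Ioc 0 4, ENNReal.ofReal (sumExpTail t ^ k)
      ≤ ∫⁻ t in Ioc 0 4, ENNReal.ofReal (exp (-(k / 64) * t ^ 2)) :=
        setLIntegral_mono' measurableSet_Ioc fun t ht ↦
          ENNReal.ofReal_le_ofReal (sumExpTail_pow_le_exp_neg_mul_sq k ht.1.le ht.2)
    _ ≤ ∫⁻ t in Ioi 0, ENNReal.ofReal (exp (-(k / 64) * t ^ 2)) :=
        lintegral_mono_set Ioc_subset_Ioi_self
    _ = ENNReal.ofReal (√(π / (k / 64)) / 2) := by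
        rw [← ofReal_integral_eq_lintegral_ofReal (integrable_exp_neg_mul_sq hb).integrableOn
          (ae_of_all _ fun _ ↦ (exp_pos _).le), integral_gaussian_Ioi]
    _ ≤ ENNReal.ofReal (8 * √(π / k)) := by
        have : √(π / (k / 64)) = 8 * √(π / k) := by
          rw [div_div_eq_mul_div, mul_comm, mul_div_assoc, sqrt_mul (by norm_num),
            show (64 : ℝ) = 8 ^ 2 by norm_num, sqrt_sq (by norm_num)]
        rw [this]
        gcongr
        linarith [sqrt_nonneg (π / k)]

lemma setLIntegral_Ioi_four_sumExpTail_pow_le {k : ℕ} (hk : 0 < k) :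
    ∫⁻ t in Ioi 4, ENNReal.ofReal (sumExpTail t ^ k) ≤
      ENNReal.ofReal (2 ^ (k + 2) / (k * exp k)) := by
  have hc : -((k : ℝ) / 4) < 0 := neg_neg_of_pos (by positivity)
  calc ∫⁻ t in Ioi 4, ENNReal.ofReal (sumExpTail t ^ k)
      ≤ ∫⁻ t in Ioi 4, ENNReal.ofReal (2 ^ k * exp (-(k / 4) * t)) :=
        setLIntegral_mono' measurableSet_Ioi fun t (ht : 4 < t) ↦
          ENNReal.ofReal_le_ofReal (sumExpTail_pow_le_two_pow_mul_exp k (by linarith))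
    _ = ENNReal.ofReal (2 ^ k * (-exp (-(k / 4) * 4) / -(k / 4))) := by
        rw [← ofReal_integral_eq_lintegral_ofReal
          ((integrableOn_exp_mul_Ioi hc 4).const_mul _) (ae_of_all _ fun _ ↦ by positivity),
          integral_const_mul, integral_exp_mul_Ioi hc]
    _ = ENNReal.ofReal (2 ^ (k + 2) / (k * exp k)) := by
        congr 1
        rw [show -((k : ℝ) / 4) * 4 = -k by ring, exp_neg, pow_add]
        field_simp
        ring

lemma setLIntegral_sumExpTail_pow_le {k : ℕ} (hk : 0 < k) :
    ∫⁻ t in Ioi 0, ENNReal.ofReal (sumExpTail t ^ k) ≤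
      ENNReal.ofReal (8 * √(π / k) + 2 ^ (k + 2) / (k * exp k)) := by
  rw [← Ioc_union_Ioi_eq_Ioi zero_le_four, lintegral_union measurableSet_Ioi
    (Ioc_disjoint_Ioi le_rfl), ENNReal.ofReal_add (by positivity) (by positivity)]
  exact add_le_add (setLIntegral_Ioc_sumExpTail_pow_le hk)
    (setLIntegral_Ioi_four_sumExpTail_pow_le hk)

namespace ProbabilityTheory

variable {Ω : Type*} [MeasurableSpace Ω] {μ : Measure Ω}

lemma measure_le_eq_ofReal_one_sub_exp [IsProbabilityMeasure μ] {X : Ω → ℝ}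
    (hX : Measurable X) (hXt : ∀ t : ℝ, 0 ≤ t → μ {ω | t < X ω} = ENNReal.ofReal (exp (-t / 2)))
    {a : ℝ} (ha : 0 ≤ a) : μ {ω | X ω ≤ a} = ENNReal.ofReal (1 - exp (-a / 2)) := by
  have hcompl : {ω | X ω ≤ a} = {ω | a < X ω}ᶜ := by ext; simp
  rw [hcompl, prob_compl_eq_one_sub (measurableSet_lt measurable_const hX), hXt a ha,
    ← ENNReal.ofReal_one, ← ENNReal.ofReal_sub _ (exp_pos _).le]

lemma IndepFun.measure_lt_add_le_sumExpTail [IsProbabilityMeasure μ] {X Y : Ω → ℝ}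
    (hXY : IndepFun X Y μ) (hX : Measurable X) (hY : Measurable Y)
    (hXt : ∀ t : ℝ, 0 ≤ t → μ {ω | t < X ω} = ENNReal.ofReal (exp (-t / 2)))
    (hYt : ∀ t : ℝ, 0 ≤ t → μ {ω | t < Y ω} = ENNReal.ofReal (exp (-t / 2)))
    {t : ℝ} (ht : 0 ≤ t) : μ {ω | t < X ω + Y ω} ≤ ENNReal.ofReal (sumExpTail t) := by
  have hquarter : -(t / 2) / 2 = -t / 4 := by ring
  have hcdf : 0 ≤ 1 - exp (-t / 4) := by linarith [exp_le_one_iff.2 (by linarith : -t / 4 ≤ 0)]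
  calc μ {ω | t < X ω + Y ω} = μ {ω | t / 2 + t / 2 < X ω + Y ω} := by rw [add_halves]
    _ ≤ 1 - μ {ω | X ω ≤ t / 2} * μ {ω | Y ω ≤ t / 2} := hXY.measure_lt_add_le hX hY _ _
    _ = ENNReal.ofReal (sumExpTail t) := by
      rw [measure_le_eq_ofReal_one_sub_exp hX hXt (by positivity),
        measure_le_eq_ofReal_one_sub_exp hY hYt (by positivity), hquarter,
        ← ENNReal.ofReal_mul hcdf, ← ENNReal.ofReal_one, ← ENNReal.ofReal_sub _ (by positivity),
        sumExpTail, sq]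

end ProbabilityTheory

theorem min_of_iid_sums_of_two_exponentials {Ω : Type*} [MeasurableSpace Ω] (μ : Measure Ω)
    [IsProbabilityMeasure μ] (k : ℕ) (hk : 0 < k)
    (W : Fin k × Fin 2 → Ω → ℝ) (hmeas : ∀ i, Measurable (W i))
    (hindep : iIndepFun W μ)
    (htail : ∀ i, ∀ t : ℝ, 0 ≤ t → μ {ω | t < W i ω} = ENNReal.ofReal (Real.exp (-t / 2))) :
    ∫⁻ ω, ENNReal.ofReal
        (Finset.univ.inf' ⟨⟨0, hk⟩, Finset.mem_univ _⟩
          (fun i : Fin k => W (i, 0) ω + W (i, 1) ω)) ∂μ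
      ≤ ENNReal.ofReal (8 * Real.sqrt (Real.pi / k) + 2 ^ (k + 2) / (k * Real.exp k)) := by
  set Z : Fin k → Ω → ℝ := fun i ω ↦ W (i, 0) ω + W (i, 1) ω
  have hZ : iIndepFun Z μ :=
    (hindep.curry hmeas).comp (fun _ v ↦ v 0 + v 1) fun _ ↦ by fun_prop
  have hZtail : ∀ i t, 0 ≤ t → μ {ω | t < Z i ω} ≤ ENNReal.ofReal (sumExpTail t) := fun i t ht ↦
    (hindep.indepFun (by simp)).measure_lt_add_le_sumExpTail (hmeas _) (hmeas _)
      (htail _) (htail _) ht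
  have hmin : Measurable fun ω ↦ Finset.univ.inf' ⟨⟨0, hk⟩, Finset.mem_univ _⟩ (Z · ω) :=
    Finset.measurable_inf' _ fun i _ ↦ (hmeas _).add (hmeas _)
  refine (lintegral_ofReal_eq_setLIntegral_measure_lt hmin.aemeasurable).trans_le <|
    (setLIntegral_mono' measurableSet_Ioi fun t (ht : 0 < t) ↦ ?_).trans
      (setLIntegral_sumExpTail_pow_le hk)
  calc _ = ∏ i, μ {ω | t < Z i ω} := hZ.measure_lt_inf' _ t
    _ ≤ ∏ _i : Fin k, ENNReal.ofReal (sumExpTail t) :=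
        Finset.prod_le_prod' fun i _ ↦ hZtail i t ht.le
    _ = ENNReal.ofReal (sumExpTail t ^ k) := by
        simp [ENNReal.ofReal_pow (sumExpTail_nonneg ht.le)]
end
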